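/- Let 2 ≤ N ≤ n be integers. Then for every integer m ≥ 1, the alternating sum ∑_{ℓ ≥ 0, ν_N(ℓ) ≤ m} (-1)^ℓ C(n, ν_N(ℓ)) · L(n, N, m − ν_N(ℓ)) equals 0, with the convention C(n,j) = 0 for j > n. -/

import Mathlib

/-- The jump map `ν_N : ℕ → ℕ`, `ν_N(2i) = Ni`, `ν_N(2i+1) = Ni + 1`. -/
def nuN (N l : ℕ) : ℕ := N * (l / 2) + l % 2

/-- A word with letters in `{1,…,n}` (modeled as `Fin n`) is admissible if it contains
no `N`-descent, i.e. no contiguous strictly decreasing subword of length `N`. -/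
def Admissible (n N : ℕ) (l : List (Fin n)) : Prop :=
  ¬ ∃ w : List (Fin n), w.length = N ∧ w.Chain' (· > ·) ∧ w <:+: l

/-- `L n N k` is the number of admissible words of length `k` with letters in `{1,…,n}`. -/
noncomputable def Lword (n N k : ℕ) : ℕ :=
  Nat.card {l : List (Fin n) // l.length = k ∧ Admissible n N l}

/-!
Write `C(n, c) · L(n, N, m - c)` as the number of words of length `m` whose first `c` letters
strictly decrease and whose remaining suffix is admissible ("the word splits at `c`"). Swapping
the order of summation, it suffices that for every nonempty word `w` the indices `ℓ` such that
`w` splits at `ν_N(ℓ)` have alternating signs summing to zero. They are paired off by sending `ℓ`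
to `ℓ + 1` if the decreasing prefix of `w` reaches length `ν_N(ℓ + 1)`, and to `ℓ - 1` otherwise.
This is an involution because `ν_N(ℓ + 2) = ν_N(ℓ) + N`: a decreasing prefix of length
`ν_N(ℓ) + N` would put an `N`-descent into the admissible suffix.
-/

open Finset

section Chains

variable {α : Type*} (R : α → α → Prop) (N : ℕ)

def ChainFree (l : List α) : Prop :=
  ¬ ∃ w : List α, w.length = N ∧ w.IsChain R ∧ w <:+: l

def HasChainPrefix (l : List α) (c : ℕ) : Prop :=
  c ≤ l.length ∧ (l.take c).IsChain R

def IsChainSplit (l : List α) (c : ℕ) : Prop :=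
  HasChainPrefix R l c ∧ ChainFree R N (l.drop c)

variable {R N} {l : List α}

theorem ChainFree.infix {l' : List α} (h : ChainFree R N l) (h' : l' <:+: l) :
    ChainFree R N l' :=
  fun ⟨w, hw, hc, hi⟩ => h ⟨w, hw, hc, hi.trans h'⟩

theorem chainFree_drop_iff {b : ℕ} (hb : b ≤ l.length) :
    ChainFree R N (l.drop b) ↔
      ∀ p, b ≤ p → p + N ≤ l.length → ¬ ((l.drop p).take N).IsChain R := by
  constructor
  · intro h p hbp hpN hw
    refine h ⟨(l.drop p).take N, by simp; omega, hw, ?_⟩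
    have hp : l.drop p = (l.drop b).drop (p - b) := by rw [List.drop_drop]; congr 1; omega
    rw [hp]
    exact (List.take_prefix _ _).isInfix.trans (List.drop_suffix _ _).isInfix
  · rintro h ⟨w, hwN, hw, s, t, hst⟩
    have hdrop : l.drop (b + s.length) = w ++ t := by
      rw [← List.drop_drop, ← hst, List.append_assoc, List.drop_left]
    have hlen := congrArg List.length hst
    simp only [List.length_drop, List.length_append] at hlen
    refine h (b + s.length) (by omega) (by omega) ?_
    rwa [hdrop, ← hwN, List.take_left]

theorem isChain_take_of_overlap {a p k : ℕ} (ha : (l.take a).IsChain R)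
    (hw : ((l.drop p).take k).IsChain R) (hpa : p < a) : (l.take (p + k)).IsChain R := by
  rw [List.isChain_iff_getElem] at *
  intro i hi
  simp only [List.length_take, List.length_drop] at ha hw hi
  by_cases hia : i + 1 < a
  · simpa using ha i (by omega)
  · have hpi : p + (i - p) = i := by omega
    have hpi' : p + (i - p + 1) = i + 1 := by omega
    simpa [hpi, hpi'] using hw (i - p) (by omega)

theorem HasChainPrefix.of_le {a b : ℕ} (h : HasChainPrefix R l a) (hba : b ≤ a) :
    HasChainPrefix R l b :=
  ⟨hba.trans h.1, by simpa [List.take_take, min_eq_left hba] using h.2.take b⟩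

theorem hasChainPrefix_one (hl : l ≠ []) : HasChainPrefix R l 1 := by
  obtain ⟨x, t, rfl⟩ := List.exists_cons_of_ne_nil hl
  exact ⟨by simp, by simp⟩

theorem IsChainSplit.of_le {a b : ℕ} (h : IsChainSplit R N l a) (hb : HasChainPrefix R l b)
    (hab : a ≤ b) : IsChainSplit R N l b := by
  refine ⟨hb, h.2.infix ?_⟩
  rw [show b = a + (b - a) by omega, ← List.drop_drop]
  exact (List.drop_suffix _ _).isInfix

theorem IsChainSplit.not_hasChainPrefix_add {c : ℕ} (h : IsChainSplit R N l c) :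
    ¬ HasChainPrefix R l (c + N) := by
  rintro ⟨hlen, hchain⟩
  refine (chainFree_drop_iff h.1.1).1 h.2 c le_rfl hlen ?_
  simpa [List.drop_take] using hchain.drop c

theorem IsChainSplit.of_not_hasChainPrefix {a b : ℕ} (h : IsChainSplit R N l a) (hba : b ≤ a)
    (hb : ¬ HasChainPrefix R l (b + N)) : IsChainSplit R N l b := by
  refine ⟨h.1.of_le hba, (chainFree_drop_iff (hba.trans h.1.1)).2 fun p hbp hpN hw => ?_⟩
  by_cases hap : a ≤ p
  · exact (chainFree_drop_iff h.1.1).1 h.2 p hap hpN hw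
  · exact hb (HasChainPrefix.of_le ⟨hpN, isChain_take_of_overlap h.1.2 hw (by omega)⟩ (by omega))

end Chains

section Nu

variable {N : ℕ}

theorem nuN_one : nuN N 1 = 1 := by simp [nuN]

theorem nuN_two_mul (k : ℕ) : nuN N (2 * k) = N * k := by
  simp [nuN]

theorem nuN_two_mul_add_one (k : ℕ) : nuN N (2 * k + 1) = N * k + 1 := by
  simp [nuN, Nat.add_div, Nat.add_mod]

theorem nuN_add_two (ℓ : ℕ) : nuN N (ℓ + 2) = nuN N ℓ + N := by
  rcases Nat.even_or_odd' ℓ with ⟨k, rfl | rfl⟩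
  · rw [show 2 * k + 2 = 2 * (k + 1) by ring, nuN_two_mul, nuN_two_mul, Nat.mul_succ]
  · rw [show 2 * k + 1 + 2 = 2 * (k + 1) + 1 by ring, nuN_two_mul_add_one,
      nuN_two_mul_add_one, Nat.mul_succ]
    omega

theorem nuN_le_nuN_succ (hN : 1 ≤ N) (ℓ : ℕ) : nuN N ℓ ≤ nuN N (ℓ + 1) := by
  rcases Nat.even_or_odd' ℓ with ⟨k, rfl | rfl⟩
  · rw [nuN_two_mul, nuN_two_mul_add_one]
    omega
  · rw [show 2 * k + 1 + 1 = 2 * (k + 1) by ring, nuN_two_mul, nuN_two_mul_add_one, Nat.mul_succ]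
    omega

theorem le_nuN (hN : 2 ≤ N) (ℓ : ℕ) : ℓ ≤ nuN N ℓ := by
  have := Nat.mul_le_mul_right (ℓ / 2) hN
  unfold nuN
  omega

end Nu

section Involution

variable {α : Type*} {R : α → α → Prop} {N : ℕ} {l : List α}

variable (R N) in
open Classical in
noncomputable def splitPartner (l : List α) (ℓ : ℕ) : ℕ :=
  if HasChainPrefix R l (nuN N (ℓ + 1)) then ℓ + 1 else ℓ - 1

theorem splitPartner_spec (hN : 1 ≤ N) (hl : l ≠ []) {ℓ : ℕ}
    (h : IsChainSplit R N l (nuN N ℓ)) :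
    IsChainSplit R N l (nuN N (splitPartner R N l ℓ)) ∧
      splitPartner R N l (splitPartner R N l ℓ) = ℓ ∧
      (splitPartner R N l ℓ = ℓ + 1 ∨ splitPartner R N l ℓ + 1 = ℓ) := by
  by_cases hup : HasChainPrefix R l (nuN N (ℓ + 1))
  · have hdown : ¬ HasChainPrefix R l (nuN N (ℓ + 1 + 1)) := by
      rw [nuN_add_two]
      exact h.not_hasChainPrefix_add
    have hj : splitPartner R N l ℓ = ℓ + 1 := if_pos hup
    have hj' : splitPartner R N l (ℓ + 1) = ℓ := if_neg hdown
    rw [hj, hj']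
    exact ⟨h.of_le hup (nuN_le_nuN_succ hN ℓ), rfl, Or.inl rfl⟩
  · obtain ⟨k, rfl⟩ : ∃ k, ℓ = k + 1 := by
      refine Nat.exists_eq_add_one.2 (Nat.pos_of_ne_zero ?_)
      rintro rfl
      exact hup (by simpa [nuN_one] using hasChainPrefix_one (R := R) hl)
    have hj : splitPartner R N l (k + 1) = k := if_neg hup
    have hj' : splitPartner R N l k = k + 1 := if_pos h.1
    rw [hj, hj']
    exact ⟨h.of_not_hasChainPrefix (nuN_le_nuN_succ hN k) (by rwa [← nuN_add_two]), rfl,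
      Or.inr rfl⟩

open Classical in
theorem sum_neg_one_pow_isChainSplit_nuN (hN : 2 ≤ N) (hl : l ≠ []) :
    ∑ ℓ ∈ range (l.length + 1),
      (if IsChainSplit R N l (nuN N ℓ) then (-1 : ℤ) ^ ℓ else 0) = 0 := by
  rw [← sum_filter]
  have hspec : ∀ ℓ ∈ (range (l.length + 1)).filter (fun ℓ => IsChainSplit R N l (nuN N ℓ)),
      _ := fun ℓ hℓ => splitPartner_spec (by omega) hl (mem_filter.1 hℓ).2
  refine sum_involution (fun ℓ _ => splitPartner R N l ℓ) (fun ℓ hℓ => ?_) (fun ℓ hℓ _ => ?_)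
    (fun ℓ hℓ => ?_) (fun ℓ hℓ => (hspec ℓ hℓ).2.1)
  · rcases (hspec ℓ hℓ).2.2 with h | h
    · rw [h, pow_succ]; ring
    · nth_rewrite 1 [← h]
      rw [pow_succ]; ring
  · rcases (hspec ℓ hℓ).2.2 with h | h <;> omega
  · have hsplit := (hspec ℓ hℓ).1
    exact mem_filter.2 ⟨mem_range.2 (Nat.lt_succ_of_le ((le_nuN hN _).trans hsplit.1.1)), hsplit⟩

end Involution

section Counting

theorem card_isChain_gt {α : Type*} [LinearOrder α] [Fintype α] (c : ℕ) :
    Nat.card {u : List α // u.length = c ∧ u.IsChain (· > ·)} = (Fintype.card α).choose c := by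
  classical
  rw [← Fintype.card_finset_len, ← Nat.card_eq_fintype_card]
  refine Nat.card_congr
    { toFun := fun u => ⟨u.1.toFinset, ?_⟩
      invFun := fun s =>
        ⟨s.1.sort (· ≥ ·), by simp [s.2], List.sortedGT_iff_isChain.1 (sortedGT_sort _)⟩
      left_inv := fun u => Subtype.ext ?_
      right_inv := fun s => Subtype.ext (sort_toFinset _ _) }
  · rw [List.toFinset_card_of_nodup (List.sortedGT_iff_isChain.2 u.2.2).nodup, u.2.1]
  · have hgt := List.sortedGT_iff_isChain.2 u.2.2
    exact (List.toFinset_sort _ hgt.nodup).2 ((List.sortedGT_iff_pairwise.1 hgt).imp le_of_lt)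

def takeDropEquiv {α : Type*} {c m : ℕ} (hc : c ≤ m) (P Q : List α → Prop) :
    {l : List α // l.length = m ∧ P (l.take c) ∧ Q (l.drop c)} ≃
      {u : List α // u.length = c ∧ P u} × {v : List α // v.length = m - c ∧ Q v} where
  toFun l := (⟨l.1.take c, by simp [l.2.1, hc], l.2.2.1⟩, ⟨l.1.drop c, by simp [l.2.1], l.2.2.2⟩)
  invFun uv := ⟨uv.1.1 ++ uv.2.1, by simp [uv.1.2.1, uv.2.2.1]; omega,
    by rw [List.take_left' uv.1.2.1]; exact uv.1.2.2,
    by rw [List.drop_left' uv.1.2.1]; exact uv.2.2.2⟩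
  left_inv l := Subtype.ext (List.take_append_drop c l.1)
  right_inv uv :=
    Prod.ext (Subtype.ext (List.take_left' uv.1.2.1)) (Subtype.ext (List.drop_left' uv.1.2.1))

theorem card_isChainSplit {n N c m : ℕ} (hc : c ≤ m) :
    Nat.card {v : List.Vector (Fin n) m // IsChainSplit (· > ·) N v.toList c} =
      n.choose c * Lword n N (m - c) := by
  have e : {v : List.Vector (Fin n) m // IsChainSplit (· > ·) N v.toList c} ≃
      {l : List (Fin n) // l.length = m ∧ (l.take c).IsChain (· > ·) ∧
        ChainFree (· > ·) N (l.drop c)} :=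
    (Equiv.subtypeSubtypeEquivSubtypeInter (fun l : List (Fin n) => l.length = m)
      (fun l => IsChainSplit (· > ·) N l c)).trans <| Equiv.subtypeEquivRight fun l =>
      ⟨fun ⟨hl, ⟨_, h1⟩, h2⟩ => ⟨hl, h1, h2⟩, fun ⟨hl, h1, h2⟩ => ⟨hl, ⟨hl ▸ hc, h1⟩, h2⟩⟩
  rw [Nat.card_congr (e.trans (takeDropEquiv hc _ _)), Nat.card_prod, card_isChain_gt,
    Fintype.card_fin]
  rfl

end Counting

theorem antisymmetrizer_alternating_sum_general (n N : ℕ) (h2 : 2 ≤ N)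
    (m : ℕ) (hm : 1 ≤ m) :
    ∑ ℓ ∈ Finset.range (m + 1),
      (if nuN N ℓ ≤ m then
        (-1 : ℤ) ^ ℓ * (Nat.choose n (nuN N ℓ) : ℤ) * (Lword n N (m - nuN N ℓ) : ℤ)
      else 0) = 0 := by
  classical
  have hterm : ∀ ℓ, (if nuN N ℓ ≤ m then
        (-1 : ℤ) ^ ℓ * (Nat.choose n (nuN N ℓ) : ℤ) * (Lword n N (m - nuN N ℓ) : ℤ) else 0) =
      ∑ v : List.Vector (Fin n) m,
        if IsChainSplit (· > ·) N v.toList (nuN N ℓ) then (-1 : ℤ) ^ ℓ else 0 := by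
    intro ℓ
    split_ifs with hℓ
    · rw [← sum_filter, sum_const, nsmul_eq_mul, ← Fintype.card_subtype,
        ← Nat.card_eq_fintype_card, card_isChainSplit hℓ]
      push_cast
      ring
    · refine (sum_eq_zero fun (v : List.Vector (Fin n) m) _ => if_neg fun h => ?_).symm
      exact hℓ (v.toList_length ▸ h.1.1)
  rw [sum_congr rfl fun ℓ _ => hterm ℓ, sum_comm]
  refine sum_eq_zero fun v _ => ?_
  have hv : v.toList ≠ [] := List.ne_nil_of_length_pos (by rw [v.toList_length]; omega)
  simpa [v.toList_length] using sum_neg_one_pow_isChainSplit_nuN h2 hv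

/-- **Coefficientwise form of the numerical Hilbert series identity**:
for every `m ≥ 1`, `∑_{ℓ≥0, ν_N(ℓ) ≤ m} (-1)^ℓ C(n, ν_N(ℓ)) L(n, N, m − ν_N(ℓ)) = 0`. -/
theorem antisymmetrizer_alternating_sum (n N : ℕ) (h2 : 2 ≤ N) (hn : N ≤ n)
    (m : ℕ) (hm : 1 ≤ m) :
    ∑ ℓ ∈ Finset.range (m + 1),
      (if nuN N ℓ ≤ m then
        (-1 : ℤ) ^ ℓ * (Nat.choose n (nuN N ℓ) : ℤ) * (Lword n N (m - nuN N ℓ) : ℤ)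
      else 0) = 0 :=
  antisymmetrizer_alternating_sum_general n N h2 m hm
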